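/- arXiv:2505.06837 — 7 statements merged into one kernel-verified Lean document; each statement's English description precedes it below -/
import Mathlib

section
/- Let P be a finite poset and let g : L(P) → {0,…,m} be a function such that for all incomparable order ideals α, β, the multiset {g(α), g(β)} equals the multiset {g(α∪β), g(α∩β)}. Then there exist a chain C = {c₁ < ⋯ < c_ℓ} in P and a function f on the initial segments {C₀,…,C_ℓ} of C such that g(α) = f(α ∩ C) for every order ideal α of P. -/
/-!
Call `x ∈ P` a jump of `g` if `g (↓x) ≠ g (↓x \ {x})`. Applied to the two middle ideals of a
square `δ ⊂ δ ∪ {x}, δ ∪ {y} ⊂ δ ∪ {x, y}` of `L(P)`, the hypothesis says that `g` is constant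
along one of its two pairs of parallel edges. Walking from `↓x \ {x}` up to any ideal `γ` to which
`x` can be added, one element at a time, it follows that adding `x` to `γ` changes `g` exactly
when `x` is a jump. Two incomparable jumps `p, q` would give a square over `(↓p ∪ ↓q) \ {p, q}` in
which both directions change `g`, so the jumps form a chain `C`. Finally, removing non-jumps one
at a time from `α` down to the ideal generated by `α ∩ C` does not change `g`.
-/

theorem Multiset.pair_eq_pair_iff {α : Type*} {a b c d : α} :
    ({a, b} : Multiset α) = {c, d} ↔ a = c ∧ b = d ∨ a = d ∧ b = c := by
  simp only [insert_eq_cons, cons_eq_cons, singleton_inj, singleton_eq_cons_iff]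
  grind

theorem IsChain.exists_strictMono_fin_range_eq {α : Type*} [PartialOrder α] {s : Set α}
    (hs : IsChain (· ≤ ·) s) (hfin : s.Finite) :
    ∃ (ℓ : ℕ) (c : Fin ℓ → α), StrictMono c ∧ Set.range c = s := by
  classical
  let := hs.linearOrder
  have := hfin.fintype
  let e := monoEquivOfFin s rfl
  refine ⟨_, Subtype.val ∘ e, Subtype.strictMono_coe _ |>.comp e.strictMono, ?_⟩
  rw [Set.range_comp, e.surjective.range_eq, Set.image_univ, Subtype.range_coe]

namespace LowerSet

variable {P : Type*} [PartialOrder P]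

theorem coe_sup_Iic {δ : LowerSet P} {x : P} (hx : Iio x ≤ δ) :
    ((δ ⊔ Iic x : LowerSet P) : Set P) = insert x (δ : Set P) := by
  ext z
  simp only [coe_sup, coe_Iic, Set.mem_union, Set.mem_Iic, Set.mem_insert_iff, SetLike.mem_coe]
  refine ⟨fun h => h.elim Or.inr fun hzx => hzx.eq_or_lt.imp id (@hx z), fun h => ?_⟩
  rcases h with rfl | h
  exacts [Or.inr le_rfl, Or.inl h]

theorem not_sup_Iic_le_sup_Iic {δ : LowerSet P} {x y : P} (hxy : x ≠ y) (hx : x ∉ δ)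
    (hxδ : Iio x ≤ δ) (hyδ : Iio y ≤ δ) : ¬ δ ⊔ Iic x ≤ δ ⊔ Iic y := by
  intro h
  have := h (show x ∈ δ ⊔ Iic x by simp [← SetLike.mem_coe, coe_sup_Iic hxδ])
  simp_all [← SetLike.mem_coe, coe_sup_Iic hyδ]

theorem sup_Iic_inf_sup_Iic {δ : LowerSet P} {x y : P} (hxy : x ≠ y)
    (hxδ : Iio x ≤ δ) (hyδ : Iio y ≤ δ) : (δ ⊔ Iic x) ⊓ (δ ⊔ Iic y) = δ := by
  refine SetLike.coe_injective ?_
  rw [coe_inf, coe_sup_Iic hxδ, coe_sup_Iic hyδ]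
  ext z
  simp only [Set.mem_inter_iff, Set.mem_insert_iff, SetLike.mem_coe]
  grind

theorem le_induction [Finite P] {β : LowerSet P} {p : LowerSet P → Prop} (base : p β)
    (step : ∀ γ x, β ≤ γ → x ∉ γ → Iio x ≤ γ → p γ → p (γ ⊔ Iic x))
    {α : LowerSet P} (hβα : β ≤ α) : p α := by
  induction α using WellFoundedLT.induction with
  | _ α ih =>
  obtain rfl | hlt := hβα.eq_or_lt
  · exact base
  obtain ⟨y, hy⟩ := (Set.toFinite ((α : Set P) \ β)).exists_maximal
    (Set.nonempty_of_ssubset (coe_ssubset_coe.mpr hlt))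
  have hyα : y ∈ α := hy.prop.1
  have hβ : β ≤ α.erase y := fun z hz =>
    ⟨hβα hz, fun hyz => hy.prop.2 (β.lower hyz hz)⟩
  have hmax : ∀ b ∈ α, y ≤ b → b = y := fun b hb hyb =>
    hy.eq_of_ge ⟨hb, fun hbβ => hy.prop.2 (β.lower hyb hbβ)⟩ hyb
  rw [← erase_sup_Iic hyα hmax]
  refine step _ y hβ (fun h => h.2 le_rfl) (fun z hz => ⟨α.lower (le_of_lt hz) hyα, (hz : z < y).not_ge⟩) ?_
  exact ih _ (erase_lt.mpr hyα) hβ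

end LowerSet

open LowerSet

section HibiHomogeneous

variable {P M : Type*} [PartialOrder P]

def IsHibiHomogeneous (g : LowerSet P → M) : Prop :=
  ∀ α β : LowerSet P, ¬ α ≤ β → ¬ β ≤ α → ({g α, g β} : Multiset M) = {g (α ⊔ β), g (α ⊓ β)}

def jumps (g : LowerSet P → M) : Set P :=
  {x | g (Iic x) ≠ g (Iio x)}

namespace IsHibiHomogeneous

variable {g : LowerSet P → M} (hg : IsHibiHomogeneous g)
include hg

theorem diamond {δ : LowerSet P} {x y : P} (hxy : x ≠ y) (hx : x ∉ δ) (hy : y ∉ δ)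
    (hxδ : Iio x ≤ δ) (hyδ : Iio y ≤ δ) :
    g (δ ⊔ Iic y) = g δ ∧ g (δ ⊔ Iic x ⊔ Iic y) = g (δ ⊔ Iic x) ∨
      g (δ ⊔ Iic x) = g δ ∧ g (δ ⊔ Iic x ⊔ Iic y) = g (δ ⊔ Iic y) := by
  have h := hg _ _ (not_sup_Iic_le_sup_Iic hxy hx hxδ hyδ)
    (not_sup_Iic_le_sup_Iic hxy.symm hy hyδ hxδ)
  rw [← sup_sup_distrib_left, ← sup_assoc, sup_Iic_inf_sup_Iic hxy hxδ hyδ] at h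
  rcases Multiset.pair_eq_pair_iff.mp h with ⟨h₁, h₂⟩ | ⟨h₁, h₂⟩
  exacts [Or.inl ⟨h₂, h₁.symm⟩, Or.inr ⟨h₁, h₂.symm⟩]

theorem sup_Iic_eq_iff [Finite P] {γ : LowerSet P} {x : P} (hx : x ∉ γ) (hxγ : Iio x ≤ γ) :
    g (γ ⊔ Iic x) = g γ ↔ x ∉ jumps g := by
  refine le_induction (p := fun γ => x ∉ γ → (g (γ ⊔ Iic x) = g γ ↔ x ∉ jumps g))
    (fun _ => ?_) (fun γ y hxγ hy hyγ ih hx' => ?_) hxγ hx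
  · rw [sup_eq_right.mpr fun _ => le_of_lt]
    exact not_not.symm
  have hx : x ∉ γ := fun h => hx' (le_sup_left (a := γ) h)
  have hxy : x ≠ y := by
    rintro rfl
    exact hx' (le_sup_right (b := Iic x) (mem_Iic_iff.mpr le_rfl))
  rw [sup_right_comm]
  rcases hg.diamond hxy hx hy hxγ hyγ with ⟨hy₁, hy₂⟩ | ⟨hx₁, hx₂⟩
  · rw [hy₂, hy₁]
    exact ih hx
  · rw [hx₂]
    exact iff_of_true rfl ((ih hx).mp hx₁)

theorem isChain_jumps [Finite P] : IsChain (· ≤ ·) (jumps g) := by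
  intro p hp q hq hpq
  by_contra! hpq'
  set δ : LowerSet P := Iio p ⊔ Iio q
  have hpδ : p ∉ δ := by
    rintro (h | h)
    exacts [lt_irrefl p h, hpq'.1 (le_of_lt h)]
  have hqδ : q ∉ δ := by
    rintro (h | h)
    exacts [hpq'.2 (le_of_lt h), lt_irrefl q h]
  rcases hg.diamond hpq hpδ hqδ le_sup_left le_sup_right with ⟨h, -⟩ | ⟨h, -⟩
  exacts [(hg.sup_Iic_eq_iff hqδ le_sup_right).mp h hq,
    (hg.sup_Iic_eq_iff hpδ le_sup_left).mp h hp]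

theorem eq_of_le_of_inter_jumps_subset [Finite P] {α β : LowerSet P} (hβα : β ≤ α)
    (hα : (α : Set P) ∩ jumps g ⊆ β) : g α = g β := by
  refine le_induction (p := fun γ => (γ : Set P) ∩ jumps g ⊆ β → g γ = g β)
    (fun _ => rfl) (fun γ y hβγ hy hyγ ih hsub => ?_) hβα hα
  have hγ : (γ : Set P) ∩ jumps g ⊆ β := fun z hz =>
    hsub ⟨le_sup_left (a := γ) hz.1, hz.2⟩
  have hyj : y ∉ jumps g := fun hj =>
    hy (hβγ (hsub ⟨le_sup_right (b := Iic y) (mem_Iic_iff.mpr le_rfl), hj⟩))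
  rw [(hg.sup_Iic_eq_iff hy hyγ).mpr hyj, ih hγ]

end IsHibiHomogeneous

end HibiHomogeneous

/-- Every standard multigrading making the Hibi ideal homogeneous is induced by a
chain: if `g : LowerSet P → {0,…,m}` satisfies, for all incomparable order ideals
`α, β`, that the multiset `{g α, g β}` equals `{g (α ⊔ β), g (α ⊓ β)}`, then there
exist a chain `c : Fin ℓ → P` (strictly monotone) and a function `f` on subsets of
`P` such that `g α = f (α ∩ C)` for every order ideal `α`. -/
theorem multigrading_induced_by_chain
    (P : Type*) [PartialOrder P] [Fintype P] (m : ℕ)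
    (g : LowerSet P → Fin (m + 1))
    (hg : ∀ α β : LowerSet P, ¬ α ≤ β → ¬ β ≤ α →
      ({g α, g β} : Multiset (Fin (m + 1))) = {g (α ⊔ β), g (α ⊓ β)}) :
    ∃ (ℓ : ℕ) (c : Fin ℓ → P), StrictMono c ∧
      ∃ f : Set P → Fin (m + 1),
        ∀ α : LowerSet P, g α = f ((α : Set P) ∩ Set.range c) := by
  obtain ⟨ℓ, c, hc, hrange⟩ :=
    (IsHibiHomogeneous.isChain_jumps hg).exists_strictMono_fin_range_eq (Set.toFinite _)
  refine ⟨ℓ, c, hc, fun S => g (lowerClosure S), fun α => ?_⟩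
  rw [hrange]
  exact IsHibiHomogeneous.eq_of_le_of_inter_jumps_subset hg
    (lowerClosure_le.mpr Set.inter_subset_left) subset_lowerClosure
end

section
/- Let P = {1,…,n} be a finite poset whose order is compatible with the natural order (i < j in P implies i < j as integers). For every function f : {1,…,n} → ℤ≥0 there exists a unique permutation π = (p₁,…,p_n) of {1,…,n} such that f is π-compatible, i.e., f(p₁) ≥ f(p₂) ≥ ⋯ ≥ f(p_n) and f(p_i) > f(p_{i+1}) whenever p_i > p_{i+1}. -/
/-- `f` is `π`-compatible: its values weakly decrease along `π` and strictly decrease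
at each descent of `π` (positions `i` with `p_i > p_{i+1}`). -/
def PiCompatible (n : ℕ) (π : Equiv.Perm (Fin n)) (f : Fin n → ℕ) : Prop :=
  (∀ (i : ℕ) (h : i + 1 < n),
      f (π ⟨i + 1, h⟩) ≤ f (π ⟨i, Nat.lt_of_succ_lt h⟩)) ∧
  (∀ (i : ℕ) (h : i + 1 < n),
      π ⟨i + 1, h⟩ < π ⟨i, Nat.lt_of_succ_lt h⟩ →
      f (π ⟨i + 1, h⟩) < f (π ⟨i, Nat.lt_of_succ_lt h⟩))

theorem piCompatible_iff_eq_sort (n : ℕ) (f : Fin n → ℕ) (π : Equiv.Perm (Fin n)) :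
    PiCompatible n π f ↔ π = Tuple.sort (fun x => OrderDual.toDual (f x)) := by
  set g : Fin n → ℕᵒᵈ := fun x => OrderDual.toDual (f x) with hg
  rw [Tuple.eq_sort_iff]
  constructor
  · rintro ⟨h1, h2⟩
    -- global antitonicity of f ∘ π
    have anti : ∀ a b : Fin n, a ≤ b → f (π b) ≤ f (π a) := by
      intro a b hab
      obtain ⟨d, hd⟩ : ∃ d, b.val = a.val + d := ⟨b.val - a.val, by
        have := (Fin.le_def).1 hab; omega⟩
      clear hab
      induction d generalizing b with
      | zero =>
        have : b = a := Fin.ext (by first | omega | (simp only [Fin.val_mk]; omega))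
        rw [this]
      | succ d ih =>
        have hk : a.val + d < n := by omega
        have hk' : a.val + d + 1 < n := by omega
        have hb : b = ⟨a.val + d + 1, hk'⟩ := Fin.ext (by first | omega | (simp only [Fin.val_mk]; omega))
        calc f (π b) ≤ f (π ⟨a.val + d, hk⟩) := by rw [hb]; exact h1 (a.val + d) hk'
          _ ≤ f (π a) := ih ⟨a.val + d, hk⟩ rfl
    -- adjacent strict increase of π under equal f values
    have adj : ∀ (a : Fin n) (h : a.val + 1 < n),
        f (π a) = f (π ⟨a.val + 1, h⟩) → π a < π ⟨a.val + 1, h⟩ := by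
      intro a h heq
      by_contra hle
      push_neg at hle
      have hne : π ⟨a.val + 1, h⟩ ≠ π a := by
        intro he
        have := π.injective he
        rw [Fin.ext_iff] at this
        simp at this
      have hlt : π ⟨a.val + 1, h⟩ < π a := lt_of_le_of_ne hle hne
      have h2' := h2 a.val h (by simpa using hlt)
      simp only [Fin.eta] at h2'
      omega
    have second : ∀ i j : Fin n, i < j → f (π i) = f (π j) → π i < π j := by
      intro i j hij heq
      obtain ⟨d, hd⟩ : ∃ d, j.val = i.val + d + 1 := ⟨j.val - i.val - 1, by
        have := (Fin.lt_def).1 hij; omega⟩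
      clear hij
      induction d generalizing j with
      | zero =>
        have h' : i.val + 1 < n := by omega
        have hj : j = ⟨i.val + 1, h'⟩ := Fin.ext (by first | omega | (simp only [Fin.val_mk]; omega))
        rw [hj] at heq ⊢
        exact adj i h' heq
      | succ d ih =>
        have hk : i.val + d + 1 < n := by omega
        set k : Fin n := ⟨i.val + d + 1, hk⟩ with hkdef
        have hik : f (π i) = f (π k) := by
          have hkj : f (π j) ≤ f (π k) := anti k j (Fin.le_def.2 (by simp [hkdef]; omega))
          have hki : f (π k) ≤ f (π i) := anti i k (Fin.le_def.2 (by simp [hkdef]; omega))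
          omega
        have hik' : π i < π k := ih k hik rfl
        have h' : k.val + 1 < n := by simp [hkdef]; omega
        have hj : j = ⟨k.val + 1, h'⟩ := Fin.ext (by simp [hkdef]; omega)
        have hadj := adj k h' (by rw [← hj, ← hik]; exact heq)
        rw [hj]
        exact hik'.trans hadj
    refine ⟨fun a b hab => ?_, fun i j hij heq => ?_⟩
    · exact OrderDual.toDual_le_toDual.2 (anti a b hab)
    · exact second i j hij (OrderDual.toDual_inj.1 heq)
  · rintro ⟨hmono, hsec⟩
    have anti : ∀ a b : Fin n, a ≤ b → f (π b) ≤ f (π a) := fun a b hab =>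
      OrderDual.toDual_le_toDual.1 (hmono hab)
    constructor
    · intro i h
      exact anti ⟨i, Nat.lt_of_succ_lt h⟩ ⟨i + 1, h⟩ (Fin.le_def.2 (by simp))
    · intro i h hlt
      have hle := anti ⟨i, Nat.lt_of_succ_lt h⟩ ⟨i + 1, h⟩ (Fin.le_def.2 (by simp))
      rcases lt_or_eq_of_le hle with h' | h'
      · exact h'
      · exfalso
        have := hsec ⟨i, Nat.lt_of_succ_lt h⟩ ⟨i + 1, h⟩ (Fin.lt_def.2 (by simp))
          (OrderDual.toDual_inj.2 h'.symm)
        exact absurd this (not_lt.2 hlt.le)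

/-- Let `P = {1,…,n}` be a poset (a partial order `po` on `Fin n`) compatible with the
natural order.  For every `f : Fin n → ℕ` there is a unique permutation `π` such that
`f` is `π`-compatible. -/
theorem exists_unique_compatible_perm
    (n : ℕ) (po : PartialOrder (Fin n))
    (hcompat : ∀ i j : Fin n, po.lt i j → i < j)
    (f : Fin n → ℕ) :
    ∃! π : Equiv.Perm (Fin n), PiCompatible n π f := by
  exact ⟨Tuple.sort (fun x => OrderDual.toDual (f x)),
    (piCompatible_iff_eq_sort n f _).2 rfl,
    fun π h => (piCompatible_iff_eq_sort n f π).1 h⟩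
end

section
/- Let P = {1,…,n} be a poset compatible with the natural order on integers. Then the set A(P) of order-reversing maps P → ℤ≥0 is the disjoint union, over all linear extensions π ∈ e(P), of the sets S_π of π-compatible functions. That is, every order-reversing map σ : P → ℤ≥0 is π-compatible for exactly one π ∈ e(P), and every π-compatible function for π ∈ e(P) is order-reversing. -/
/-- `π` belongs to the Jordan–Hölder set `e(P)`: if `p_i <_P p_j` then `i < j`. -/
def IsLinearExtension (n : ℕ) (po : PartialOrder (Fin n)) (π : Equiv.Perm (Fin n)) : Prop :=
  ∀ i j : Fin n, po.lt (π i) (π j) → i < j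

open OrderDual

lemma Fin.strictMono_iff_lt_succ' {α : Type*} [Preorder α] {n : ℕ} {f : Fin n → α} :
    StrictMono f ↔ ∀ (i : ℕ) (h : i + 1 < n), f ⟨i, Nat.lt_of_succ_lt h⟩ < f ⟨i + 1, h⟩ := by
  cases n with
  | zero =>
    exact ⟨fun _ i h => absurd h (Nat.not_succ_le_zero _), fun _ => Subsingleton.strictMono f⟩
  | succ n =>
    rw [Fin.strictMono_iff_lt_succ]
    exact ⟨fun h i hi => h ⟨i, Nat.succ_lt_succ_iff.1 hi⟩, fun h i => h i (Nat.succ_lt_succ i.2)⟩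

section PiCompatible

variable {n : ℕ} {π : Equiv.Perm (Fin n)} {σ : Fin n → ℕ}

lemma piCompatible_iff_strictMono_toLex :
    PiCompatible n π σ ↔ StrictMono fun k => toLex (toDual (σ (π k)), π k) := by
  rw [Fin.strictMono_iff_lt_succ', PiCompatible, ← forall₂_and]
  refine forall₂_congr fun i h => ?_
  have hne : π ⟨i, Nat.lt_of_succ_lt h⟩ ≠ π ⟨i + 1, h⟩ :=
    π.injective.ne (Fin.ne_of_val_ne (Nat.succ_ne_self i).symm)
  rw [Prod.Lex.toLex_lt_toLex, toDual_lt_toDual, toDual_inj]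
  grind

lemma piCompatible_iff_eq_sort_s8 : PiCompatible n π σ ↔ π = Tuple.sort (toDual ∘ σ) := by
  rw [Tuple.eq_sort_iff', piCompatible_iff_strictMono_toLex]
  rfl

lemma PiCompatible.apply_le_apply_of_lt (h : PiCompatible n π σ) {i j : Fin n} (hij : i < j) :
    σ (π j) ≤ σ (π i) :=
  Prod.Lex.monotone_fst_ofLex.comp (piCompatible_iff_strictMono_toLex.1 h).monotone hij.le

lemma PiCompatible.lt_of_apply_lt (h : PiCompatible n π σ) {i j : Fin n} (hπ : π i < π j)
    (hσ : σ (π j) ≤ σ (π i)) : i < j := by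
  refine (piCompatible_iff_strictMono_toLex.1 h).lt_iff_lt.1 (Prod.Lex.toLex_lt_toLex.2 ?_)
  rcases hσ.lt_or_eq with hlt | heq
  · exact .inl hlt
  · exact .inr ⟨congrArg toDual heq.symm, hπ⟩

lemma PiCompatible.isLinearExtension (po : PartialOrder (Fin n))
    (hcompat : ∀ i j : Fin n, po.lt i j → i < j) (hσ : ∀ i j : Fin n, po.le i j → σ j ≤ σ i)
    (h : PiCompatible n π σ) : IsLinearExtension n po π := fun _ _ hij =>
  h.lt_of_apply_lt (hcompat _ _ hij) (hσ _ _ ((po.lt_iff_le_not_ge _ _).1 hij).1)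

lemma PiCompatible.le_of_isLinearExtension {po : PartialOrder (Fin n)}
    (h : PiCompatible n π σ) (hπ : IsLinearExtension n po π) {i j : Fin n} (hij : po.le i j) :
    σ j ≤ σ i := by
  obtain rfl | hne := eq_or_ne i j
  · rfl
  have hlt : po.lt i j :=
    (po.lt_iff_le_not_ge i j).2 ⟨hij, fun hji => hne (po.le_antisymm i j hij hji)⟩
  simpa using h.apply_le_apply_of_lt (hπ (π.symm i) (π.symm j) (by simpa using hlt))

end PiCompatible

/-- The set `A(P)` of order-reversing maps `P → ℤ≥0` is the disjoint union over
linear extensions `π ∈ e(P)` of the sets of `π`-compatible functions: every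
order-reversing map is `π`-compatible for exactly one `π ∈ e(P)`, and every
`π`-compatible function for `π ∈ e(P)` is order-reversing. -/
theorem order_reversing_disjoint_union_compatible
    (n : ℕ) (po : PartialOrder (Fin n))
    (hcompat : ∀ i j : Fin n, po.lt i j → i < j) :
    (∀ σ : Fin n → ℕ, (∀ i j : Fin n, po.le i j → σ j ≤ σ i) →
      ∃! π : Equiv.Perm (Fin n), IsLinearExtension n po π ∧ PiCompatible n π σ) ∧
    (∀ (π : Equiv.Perm (Fin n)) (σ : Fin n → ℕ),
      IsLinearExtension n po π → PiCompatible n π σ →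
      ∀ i j : Fin n, po.le i j → σ j ≤ σ i) := by
  refine ⟨fun σ hσ => ⟨Tuple.sort (toDual ∘ σ), ?_, fun π hπ => piCompatible_iff_eq_sort_s8.1 hπ.2⟩,
    fun π σ hπ h _ _ hij => h.le_of_isLinearExtension hπ hij⟩
  have h : PiCompatible n _ σ := piCompatible_iff_eq_sort_s8.2 rfl
  exact ⟨h.isLinearExtension po hcompat hσ, h⟩
end

section
/- The Eulerian polynomials satisfy the recurrence A_n(t) = A_{n−1}(t) + Σ_{k=1}^{n−1} binom(n−1, k−1) A_{k−1}(t) A_{n−k}(t) t for n ≥ 1, where A₀(t) = 1. -/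
/-
Classify the permutations of `{0, …, m}` by the position of the largest letter `m`. Writing
`w = u m v`, the descents of `w` are those of `u` and of `v`, plus the descent from `m` to the first
letter of `v` when `v` is nonempty. Descents only depend on the relative order of the letters, so
the words `u` whose letter set is a fixed `k`-subset of `{0, …, m - 1}` contribute `A_k`, the
words `v` on the complementary letters contribute `A_{m-k}`, and there are `C(m, k)` such subsets.
-/

open Polynomial

/-- The number of descents of a permutation of `{1,…,r}` (positions `i < r` with
`σ(i) > σ(i+1)`). -/
noncomputable def descentsCount (r : ℕ) (σ : Equiv.Perm (Fin r)) : ℕ :=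
  (Finset.univ.filter fun i : Fin r =>
    ∃ h : (i : ℕ) + 1 < r, σ ⟨(i : ℕ) + 1, h⟩ < σ i).card

/-- The Eulerian polynomial `A_r(t) = ∑_{σ ∈ S_r} t^{des σ}`, with `A₀(t) = 1`. -/
noncomputable def eulerianPoly (r : ℕ) : Polynomial ℤ :=
  ∑ σ : Equiv.Perm (Fin r), X ^ descentsCount r σ

open Finset

namespace List

variable {α β : Type*} [LinearOrder α] [LinearOrder β]

def numDescents : List α → ℕ
  | a :: b :: l => (if b < a then 1 else 0) + numDescents (b :: l)
  | _ => 0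

@[simp] theorem numDescents_nil : ([] : List α).numDescents = 0 := rfl
@[simp] theorem numDescents_singleton (a : α) : [a].numDescents = 0 := rfl
theorem numDescents_cons_cons (a b : α) (l : List α) :
    (a :: b :: l).numDescents = (if b < a then 1 else 0) + (b :: l).numDescents := rfl

theorem numDescents_map {f : α → β} (hf : StrictMono f) (l : List α) :
    (l.map f).numDescents = l.numDescents := by
  induction l with
  | nil => rfl
  | cons a l ih =>
    cases l with
    | nil => rfl
    | cons b l => simp_all [numDescents_cons_cons, hf.lt_iff_lt]

theorem numDescents_ofFn {r : ℕ} (w : Fin r → α) :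
    (ofFn w).numDescents = #{i : Fin r | ∃ h : (i : ℕ) + 1 < r, w ⟨i + 1, h⟩ < w i} := by
  induction r with
  | zero => simp
  | succ r ih =>
    rw [ofFn_succ, card_filter, Fin.sum_univ_succ, ← card_filter]
    cases r with
    | zero =>
      rw [if_neg (by rintro ⟨h, -⟩; omega), ofFn_zero, univ_eq_empty, filter_empty, card_empty]
      rfl
    | succ r =>
      rw [ofFn_succ, numDescents_cons_cons, ← ofFn_succ (f := fun i => w i.succ), ih]
      congr 2
      · simp [Fin.succ]
      · ext i
        simp [Fin.succ]

theorem numDescents_cons_of_forall_lt {M : α} {l : List α} (h : ∀ x ∈ l, x < M) :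
    (M :: l).numDescents = l.numDescents + if l = [] then 0 else 1 := by
  cases l with
  | nil => rfl
  | cons b l => simp [numDescents_cons_cons, h b, add_comm]

theorem numDescents_append_cons_of_forall_lt {M : α} {l₁ l₂ : List α}
    (h₁ : ∀ x ∈ l₁, x < M) (h₂ : ∀ x ∈ l₂, x < M) :
    (l₁ ++ M :: l₂).numDescents =
      l₁.numDescents + l₂.numDescents + if l₂ = [] then 0 else 1 := by
  induction l₁ with
  | nil => simp [numDescents_cons_of_forall_lt h₂]
  | cons a l ih =>
    cases l with
    | nil =>
      simp [numDescents_cons_cons, (h₁ a (by simp)).not_gt, numDescents_cons_of_forall_lt h₂]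
    | cons b l =>
      simp only [cons_append, numDescents_cons_cons] at ih ⊢
      rw [ih (fun x hx => h₁ x (mem_cons_of_mem a hx))]
      ring

end List

namespace Finset

section Arrangements

variable {α : Type*} [DecidableEq α]

def arrangements (s : Finset α) : Finset (List α) := s.val.lists.toFinset

theorem mem_arrangements {s : Finset α} {l : List α} :
    l ∈ s.arrangements ↔ l.Nodup ∧ l.toFinset = s := by
  rw [arrangements, Multiset.mem_toFinset, Multiset.mem_lists_iff]
  constructor
  · intro h
    have hl : l.Nodup :=
      Multiset.coe_nodup.1 (by rw [← Multiset.quot_mk_to_coe, ← h]; exact s.nodup)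
    refine ⟨hl, ?_⟩
    rw [← Finset.val_inj, List.toFinset_val, hl.dedup, h]
    rfl
  · rintro ⟨hl, rfl⟩
    rw [List.toFinset_val, hl.dedup]
    rfl

theorem append_cons_mem_arrangements_insert_iff {M : α} {s : Finset α} (hM : M ∉ s)
    {l₁ l₂ : List α} :
    l₁ ++ M :: l₂ ∈ (insert M s).arrangements ↔
      ∃ T ⊆ s, l₁ ∈ T.arrangements ∧ l₂ ∈ (s \ T).arrangements := by
  simp only [mem_arrangements, List.nodup_append, List.nodup_cons, Finset.ext_iff,
    List.mem_toFinset, List.mem_append, List.mem_cons, mem_insert, mem_sdiff, subset_iff]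
  constructor
  · rintro ⟨⟨h₁, ⟨hM₂, h₂⟩, hdisj⟩, hmem⟩
    refine ⟨l₁.toFinset, ?_, ⟨h₁, fun _ => List.mem_toFinset.symm⟩, h₂, ?_⟩ <;>
      simp only [List.mem_toFinset] <;> grind
  · rintro ⟨T, hT, ⟨h₁, hT₁⟩, h₂, hT₂⟩
    grind

theorem sum_arrangements_insert {R : Type*} [AddCommMonoid R] {M : α} {s : Finset α}
    (hM : M ∉ s) (g : List α → R) :
    ∑ l ∈ (insert M s).arrangements, g l =
      ∑ T ∈ s.powerset, ∑ l₁ ∈ T.arrangements, ∑ l₂ ∈ (s \ T).arrangements,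
        g (l₁ ++ M :: l₂) := by
  simp_rw [← sum_product', sum_sigma']
  symm
  refine sum_bij (fun x _ => x.2.1 ++ M :: x.2.2) ?_ ?_ ?_ (fun _ _ => rfl)
  · rintro ⟨T, l₁, l₂⟩ hx
    simp only [mem_sigma, mem_powerset, mem_product] at hx
    exact (append_cons_mem_arrangements_insert_iff hM).2 ⟨T, hx.1, hx.2⟩
  · rintro ⟨T, l₁, l₂⟩ hx ⟨T', l₁', l₂'⟩ hx' h
    simp only [mem_sigma, mem_powerset, mem_product, mem_arrangements] at hx hx'
    obtain ⟨hT, ⟨-, rfl⟩, -, hl₂⟩ := hx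
    obtain ⟨-, ⟨-, rfl⟩, -, -⟩ := hx'
    have h₁ : M ∉ l₁ := fun h => hM (hT (List.mem_toFinset.2 h))
    have h₂ : M ∉ l₂ := fun h => hM (mem_sdiff.1 (hl₂ ▸ List.mem_toFinset.2 h)).1
    obtain ⟨rfl, -, rfl⟩ := (List.append_cons_inj_of_notMem h₁ h₂).1 h
    rfl
  · intro l hl
    have hMl : M ∈ l := List.mem_toFinset.1 ((mem_arrangements.1 hl).2 ▸ mem_insert_self M s)
    obtain ⟨l₁, l₂, rfl⟩ := List.append_of_mem hMl
    obtain ⟨T, hT, h₁, h₂⟩ := (append_cons_mem_arrangements_insert_iff hM).1 hl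
    exact ⟨⟨T, l₁, l₂⟩, by simp [hT, h₁, h₂], rfl⟩

theorem map_mem_arrangements_map {β : Type*} [DecidableEq β] (f : α ↪ β) {s : Finset α}
    {l : List α} : l.map f ∈ (s.map f).arrangements ↔ l ∈ s.arrangements := by
  have : (l.map f).toFinset = l.toFinset.map f := by ext; simp
  simp only [mem_arrangements, List.nodup_map_iff f.injective, this, map_inj]

end Arrangements

variable {α β : Type*} [LinearOrder α] [LinearOrder β]

noncomputable def descentPoly (s : Finset α) : ℤ[X] :=
  ∑ l ∈ s.arrangements, X ^ l.numDescents

theorem descentPoly_map (f : α ↪o β) (s : Finset α) :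
    (s.map f.toEmbedding).descentPoly = s.descentPoly := by
  symm
  refine sum_nbij (List.map f) (fun l hl => (map_mem_arrangements_map _).2 hl)
    (fun _ _ _ _ h => List.map_injective_iff.2 f.injective h) ?_
    (fun l _ => by rw [List.numDescents_map f.strictMono])
  intro l' hl'
  obtain ⟨l, rfl⟩ : l' ∈ Set.range (List.map f) := by
    rw [Set.range_list_map]
    intro y hy
    obtain ⟨x, -, rfl⟩ := mem_map.1 ((mem_arrangements.1 hl').2 ▸ List.mem_toFinset.2 hy)
    exact ⟨x, rfl⟩
  exact ⟨l, (map_mem_arrangements_map _).1 hl', rfl⟩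

theorem descentPoly_univ_fin (r : ℕ) : (univ : Finset (Fin r)).descentPoly = eulerianPoly r := by
  symm
  refine sum_nbij (fun σ => List.ofFn σ) ?_ ?_ ?_ ?_
  · intro σ _
    rw [mem_arrangements]
    refine ⟨List.nodup_ofFn.2 σ.injective, eq_univ_iff_forall.2 fun i => ?_⟩
    simpa using σ.surjective i
  · exact fun σ _ τ _ h => Equiv.coe_fn_injective (List.ofFn_injective h)
  · intro l hl
    rw [mem_coe, mem_arrangements] at hl
    obtain ⟨hnd, hl⟩ := hl
    have hlen : l.length = r := by
      simpa [List.toFinset_card_of_nodup hnd] using congrArg card hl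
    let e := hnd.getEquivOfForallMemList l fun i => by simp [← List.mem_toFinset, hl]
    refine ⟨(finCongr hlen.symm).trans e, mem_coe.2 (mem_univ _), ?_⟩
    exact List.ext_getElem (by simp [hlen]) fun i _ _ => by simp [e]
  · exact fun σ _ => by rw [List.numDescents_ofFn]; rfl

theorem descentPoly_eq_eulerianPoly (s : Finset α) : s.descentPoly = eulerianPoly #s := by
  calc s.descentPoly
      = ((univ : Finset (Fin #s)).map (s.orderEmbOfFin rfl).toEmbedding).descentPoly := by
        rw [map_orderEmbOfFin_univ]
    _ = eulerianPoly #s := by rw [descentPoly_map, descentPoly_univ_fin]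

theorem descentPoly_insert_of_forall_lt {M : α} {s : Finset α} (hM : ∀ x ∈ s, x < M) :
    (insert M s).descentPoly =
      ∑ T ∈ s.powerset, T.descentPoly * (s \ T).descentPoly * if T = s then 1 else X := by
  rw [descentPoly, sum_arrangements_insert fun h => (hM M h).false]
  refine sum_congr rfl fun T hT => ?_
  simp_rw [descentPoly, sum_mul_sum, sum_mul]
  refine sum_congr rfl fun l₁ h₁ => sum_congr rfl fun l₂ h₂ => ?_
  rw [mem_arrangements] at h₁ h₂
  have lt₁ (x : α) (hx : x ∈ l₁) : x < M :=
    hM x (mem_powerset.1 hT (h₁.2 ▸ List.mem_toFinset.2 hx))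
  have lt₂ (x : α) (hx : x ∈ l₂) : x < M :=
    hM x (mem_sdiff.1 (h₂.2 ▸ List.mem_toFinset.2 hx)).1
  have nil_iff : l₂ = [] ↔ T = s := by
    rw [← List.toFinset_eq_empty_iff, h₂.2, sdiff_eq_empty_iff_subset]
    exact ⟨fun h => (mem_powerset.1 hT).antisymm h, fun h => h.ge⟩
  rw [List.numDescents_append_cons_of_forall_lt lt₁ lt₂, pow_add, pow_add]
  simp only [nil_iff, apply_ite (X ^ ·), pow_zero, pow_one]

end Finset

theorem eulerianPoly_zero : eulerianPoly 0 = 1 := by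
  simp [eulerianPoly, descentsCount]

theorem eulerianPoly_succ (m : ℕ) :
    eulerianPoly (m + 1) = ∑ k ∈ range (m + 1),
      (m.choose k : ℤ[X]) * (eulerianPoly k * eulerianPoly (m - k) * if k = m then 1 else X) := by
  set s : Finset (Fin (m + 1)) := univ.map Fin.castSuccEmb
  have hlast : ∀ i ∈ s, i < Fin.last m := by simp [s, Fin.castSucc_lt_last]
  have hcard : #s = m := by simp [s]
  rw [← Finset.descentPoly_univ_fin, Fin.univ_castSuccEmb, cons_eq_insert,
    Finset.descentPoly_insert_of_forall_lt hlast]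
  calc _ = ∑ T ∈ s.powerset,
        eulerianPoly #T * eulerianPoly (m - #T) * if #T = m then 1 else X := by
        refine sum_congr rfl fun T hT => ?_
        have hTs := mem_powerset.1 hT
        rw [Finset.descentPoly_eq_eulerianPoly, Finset.descentPoly_eq_eulerianPoly,
          card_sdiff_of_subset hTs, hcard]
        have : T = s ↔ #T = m :=
          ⟨fun h => h ▸ hcard, fun h => eq_of_subset_of_card_le hTs (by omega)⟩
        simp only [this]
    _ = ∑ k ∈ range (m + 1),
          (m.choose k : ℤ[X]) *
            (eulerianPoly k * eulerianPoly (m - k) * if k = m then 1 else X) := by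
        rw [sum_powerset_apply_card (fun k => eulerianPoly k * eulerianPoly (m - k) *
          if k = m then 1 else X), hcard]
        simp only [nsmul_eq_mul]

theorem eulerianPoly_recurrence_general (n : ℕ) :
    eulerianPoly n = eulerianPoly (n - 1) +
      ∑ k ∈ Finset.Icc 1 (n - 1),
        ((n - 1).choose (k - 1) : Polynomial ℤ) *
          eulerianPoly (k - 1) * eulerianPoly (n - k) * X := by
  cases n with
  | zero => simp
  | succ m =>
    rw [Nat.add_sub_cancel, eulerianPoly_succ, sum_range_succ, if_pos rfl, Nat.sub_self,
      eulerianPoly_zero, Nat.choose_self, add_comm]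
    simp only [Nat.cast_one, one_mul, mul_one]
    congr 1
    rw [← Ico_add_one_right_eq_Icc, sum_Ico_eq_sum_range, Nat.add_sub_cancel]
    refine sum_congr rfl fun k hk => ?_
    rw [if_neg (mem_range.1 hk).ne, Nat.add_sub_cancel_left, add_comm 1 k, Nat.add_sub_add_right]
    ring

/-- The Eulerian polynomials satisfy the recurrence
`A_n(t) = A_{n−1}(t) + ∑_{k=1}^{n−1} C(n−1, k−1) A_{k−1}(t) A_{n−k}(t) t` for `n ≥ 1`. -/
theorem eulerianPoly_recurrence (n : ℕ) (hn : 1 ≤ n) :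
    eulerianPoly n = eulerianPoly (n - 1) +
      ∑ k ∈ Finset.Icc 1 (n - 1),
        ((n - 1).choose (k - 1) : Polynomial ℤ) *
          eulerianPoly (k - 1) * eulerianPoly (n - k) * X :=
  eulerianPoly_recurrence_general n
end

section
/- Let P be a finite poset and C a chain in P such that P \ C is not a chain, i.e., there exist incomparable elements a, b ∈ P \ C. Then there exist order ideals α', β of P that are incomparable under inclusion and satisfy α' ∩ C = β ∩ C. (Hence x_{α'} x_{β} is a minimal generator of the initial ideal of the Hibi ideal whose multidegree is 2e_j, not squarefree in the chain multigrading.) -/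
/-- If `C` is a chain in a finite poset `P` such that `P \ C` is not a chain (there
are incomparable `a, b ∈ P \ C`), then there exist order ideals `α, β` of `P` that are
incomparable under inclusion and satisfy `α ∩ C = β ∩ C`. -/
theorem exists_incomparable_ideals_same_chain_intersection
    (P : Type*) [PartialOrder P] [Fintype P] (C : Set P)
    (hC : IsChain (· ≤ ·) C) (a b : P) (ha : a ∉ C) (hb : b ∉ C)
    (hab : ¬ a ≤ b) (hba : ¬ b ≤ a) :
    ∃ α β : LowerSet P, ¬ α ≤ β ∧ ¬ β ≤ α ∧ (α : Set P) ∩ C = (β : Set P) ∩ C := by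
  set S : Set P := (Set.Iic a ∪ Set.Iic b) ∩ C with hS
  set L : LowerSet P := lowerClosure S with hL
  refine ⟨LowerSet.Iic a ⊔ L, LowerSet.Iic b ⊔ L, ?_, ?_, ?_⟩
  · intro h
    have haa : a ∈ (LowerSet.Iic a ⊔ L : LowerSet P) := Or.inl le_rfl
    have := h haa
    rcases this with h1 | h2
    · exact hab h1
    · obtain ⟨c, ⟨hc1, hc2⟩, hac⟩ := h2
      rcases hc1 with h1 | h1
      · exact ha (le_antisymm hac h1 ▸ hc2)
      · exact hab (hac.trans h1)
  · intro h
    have hbb : b ∈ (LowerSet.Iic b ⊔ L : LowerSet P) := Or.inl le_rfl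
    have := h hbb
    rcases this with h1 | h2
    · exact hba h1
    · obtain ⟨c, ⟨hc1, hc2⟩, hbc⟩ := h2
      rcases hc1 with h1 | h1
      · exact hba (hbc.trans h1)
      · exact hb (le_antisymm hbc h1 ▸ hc2)
  · have key : ∀ x : P, x ∈ C → (x ∈ L ↔ x ∈ S) := by
      intro x hxC
      constructor
      · rintro ⟨c, ⟨hc1, hc2⟩, hxc⟩
        rcases hc1 with h1 | h1
        · exact ⟨Or.inl (hxc.trans h1), hxC⟩
        · exact ⟨Or.inr (hxc.trans h1), hxC⟩
      · exact fun hx => subset_lowerClosure hx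
    ext x
    simp only [Set.mem_inter_iff, LowerSet.coe_sup, Set.mem_union]
    constructor
    · rintro ⟨h1 | h2, hxC⟩
      · exact ⟨Or.inr ((key x hxC).mpr ⟨Or.inl h1, hxC⟩), hxC⟩
      · exact ⟨Or.inr h2, hxC⟩
    · rintro ⟨h1 | h2, hxC⟩
      · exact ⟨Or.inr ((key x hxC).mpr ⟨Or.inr h1, hxC⟩), hxC⟩
      · exact ⟨Or.inr h2, hxC⟩
end

section
/- Let P = {1,…,n} be a poset compatible with the natural order, let π = (p₁,…,p_n) be a permutation, and for i ∈ {1,…,n} let d_i(π) = |{j ∈ {i,…,n} : p_j > p_{j+1}}| with the convention p_{n+1} = n+1. Then a function σ : {1,…,n} → ℤ≥0 is π-compatible if and only if the sequence σ(p₁) − d₁(π) ≥ σ(p₂) − d₂(π) ≥ ⋯ ≥ σ(p_n) − d_n(π) ≥ 0 is weakly decreasing and nonnegative. -/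
/-- `d_i(π)`: the number of descents of `π` at positions `j ≥ i` (with the convention
`p_{n+1} = n + 1`, so position `n` is never a descent). -/
noncomputable def tailDescents (n : ℕ) (π : Equiv.Perm (Fin n)) (i : Fin n) : ℕ :=
  (Finset.univ.filter fun j : Fin n =>
    i ≤ j ∧ ∃ h : (j : ℕ) + 1 < n, π ⟨(j : ℕ) + 1, h⟩ < π j).card


lemma tailDescents_last (n : ℕ) (π : Equiv.Perm (Fin n)) (h : 0 < n) :
    tailDescents n π ⟨n - 1, by omega⟩ = 0 := by
  unfold tailDescents
  rw [Finset.card_eq_zero, Finset.filter_eq_empty_iff]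
  rintro j - ⟨hle, hd, -⟩
  have := j.isLt
  rw [Fin.le_def] at hle
  simp only at hle
  omega

lemma tailDescents_succ (n : ℕ) (π : Equiv.Perm (Fin n)) (i : ℕ) (h : i + 1 < n) :
    tailDescents n π ⟨i, Nat.lt_of_succ_lt h⟩ =
      tailDescents n π ⟨i + 1, h⟩ +
        (if π ⟨i + 1, h⟩ < π ⟨i, Nat.lt_of_succ_lt h⟩ then 1 else 0) := by
  unfold tailDescents
  by_cases hd : π ⟨i + 1, h⟩ < π ⟨i, Nat.lt_of_succ_lt h⟩
  · rw [if_pos hd]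
    have hset : (Finset.univ.filter fun j : Fin n =>
        (⟨i, Nat.lt_of_succ_lt h⟩ : Fin n) ≤ j ∧ ∃ h' : (j : ℕ) + 1 < n, π ⟨(j : ℕ) + 1, h'⟩ < π j)
        = insert ⟨i, Nat.lt_of_succ_lt h⟩ (Finset.univ.filter fun j : Fin n =>
        (⟨i + 1, h⟩ : Fin n) ≤ j ∧ ∃ h' : (j : ℕ) + 1 < n, π ⟨(j : ℕ) + 1, h'⟩ < π j) := by
      ext j
      simp only [Finset.mem_filter, Finset.mem_insert, Finset.mem_univ, true_and, Fin.le_def,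
        Fin.ext_iff]
      constructor
      · rintro ⟨hle, hP⟩
        rcases eq_or_lt_of_le hle with heq | hlt
        · exact Or.inl heq.symm
        · exact Or.inr ⟨hlt, hP⟩
      · rintro (heq | ⟨hle, hP⟩)
        · have hj : j = ⟨i, Nat.lt_of_succ_lt h⟩ := Fin.ext heq
          subst hj
          exact ⟨le_refl _, h, hd⟩
        · exact ⟨by omega, hP⟩
    rw [hset, Finset.card_insert_of_notMem]
    simp only [Finset.mem_filter, Finset.mem_univ, true_and, not_and]
    intro hle
    rw [Fin.le_def] at hle
    simp only [Fin.val_mk] at hle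
    omega
  · rw [if_neg hd, add_zero]
    congr 1
    ext j
    simp only [Finset.mem_filter, Finset.mem_univ, true_and, Fin.le_def]
    constructor
    · rintro ⟨hle, hP⟩
      refine ⟨?_, hP⟩
      rcases eq_or_lt_of_le hle with heq | hlt
      · exfalso
        obtain ⟨h', hd'⟩ := hP
        have : j = ⟨i, Nat.lt_of_succ_lt h⟩ := Fin.ext heq.symm
        subst this
        exact hd hd'
      · omega
    · rintro ⟨hle, hP⟩; exact ⟨by omega, hP⟩

lemma tailDescents_le_of_compatible (n : ℕ) (π : Equiv.Perm (Fin n)) (σ : Fin n → ℕ)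
    (hc : PiCompatible n π σ) : ∀ i : Fin n, tailDescents n π i ≤ σ (π i) := by
  have key : ∀ k, ∀ (i : ℕ) (hi : i < n), n - 1 - i ≤ k →
      tailDescents n π ⟨i, hi⟩ ≤ σ (π ⟨i, hi⟩) := by
    intro k
    induction k with
    | zero =>
      intro i hi hle
      have : i = n - 1 := by omega
      subst this
      rw [tailDescents_last n π (by omega)]
      exact Nat.zero_le _
    | succ k ih =>
      intro i hi hle
      by_cases h1 : i + 1 < n
      · have hrec := tailDescents_succ n π i h1
        have hihyp := ih (i + 1) h1 (by omega)
        by_cases hd : π ⟨i + 1, h1⟩ < π ⟨i, Nat.lt_of_succ_lt h1⟩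
        · have := hc.2 i h1 hd
          rw [hrec, if_pos hd]
          omega
        · have := hc.1 i h1
          rw [hrec, if_neg hd]
          omega
      · have : i = n - 1 := by omega
        subst this
        rw [tailDescents_last n π (by omega)]
        exact Nat.zero_le _
  intro i
  exact key (n - 1 - i) i i.isLt le_rfl

/-- `σ` is `π`-compatible iff the sequence `σ(p_i) − d_i(π)` is weakly decreasing and
nonnegative. -/
theorem piCompatible_iff_shifted_antitone_nonneg
    (n : ℕ) (π : Equiv.Perm (Fin n)) (σ : Fin n → ℕ) :
    PiCompatible n π σ ↔
      ((∀ (i : ℕ) (h : i + 1 < n),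
          (σ (π ⟨i + 1, h⟩) : ℤ) - tailDescents n π ⟨i + 1, h⟩ ≤
            (σ (π ⟨i, Nat.lt_of_succ_lt h⟩) : ℤ) -
              tailDescents n π ⟨i, Nat.lt_of_succ_lt h⟩) ∧
        ∀ i : Fin n, (tailDescents n π i : ℤ) ≤ (σ (π i) : ℤ)) := by
  constructor
  · intro hc
    refine ⟨?_, fun i => by exact_mod_cast tailDescents_le_of_compatible n π σ hc i⟩
    intro i h
    have hrec := tailDescents_succ n π i h
    by_cases hd : π ⟨i + 1, h⟩ < π ⟨i, Nat.lt_of_succ_lt h⟩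
    · have := hc.2 i h hd
      rw [hrec, if_pos hd]
      push_cast
      omega
    · have := hc.1 i h
      rw [hrec, if_neg hd]
      push_cast
      omega
  · rintro ⟨hmono, hpos⟩
    constructor
    · intro i h
      have hi := hmono i h
      have hrec := tailDescents_succ n π i h
      by_cases hd : π ⟨i + 1, h⟩ < π ⟨i, Nat.lt_of_succ_lt h⟩
      · rw [hrec, if_pos hd] at hi; push_cast at hi; omega
      · rw [hrec, if_neg hd] at hi; push_cast at hi; omega
    · intro i h hd
      have hi := hmono i h
      have hrec := tailDescents_succ n π i h
      rw [hrec, if_pos hd] at hi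
      push_cast at hi
      omega
end

section
/- Let P be a finite poset with n elements, C = {c₁ < ⋯ < c_ℓ} a chain in P, and a = (a₀, a₁, …, a_ℓ) a vector of nonnegative integers with s = a₀ + ⋯ + a_ℓ. Then the number of multichains α₁ ⊇ ⋯ ⊇ α_s of order ideals of P such that for each i ∈ {0,…,ℓ} exactly a_i of the ideals α_j satisfy α_j ∩ C = C_i equals the number of order-reversing maps σ : P → {0,…,s} with σ(c_j) = a_ℓ + a_{ℓ−1} + ⋯ + a_j for every j ∈ {1,…,ℓ}. -/
/-!
An antitone family `α : Fin s → LowerSet P` is recovered from the order-reversing map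
`σ p = #{j | p ∈ α j}` as `α j = {p | j < σ p}`, and every order-reversing `σ ≤ s` arises this
way. If `r j` is the index with `α j ∩ C = C_(r j)`, then `c t ∈ α j ↔ t < r j`, so
`σ (c t) = #{j | t < r j}`. Hence prescribing the fibre sizes `#{j | r j = i} = a i` is the
same as prescribing their tail sums `σ (c t) = ∑_{i > t} a i`.
-/

open scoped Classical
open Finset

theorem Fin.mem_iff_lt_card_of_isLowerSet {n : ℕ} {F : Finset (Fin n)}
    (hF : IsLowerSet (F : Set (Fin n))) (x : Fin n) : x ∈ F ↔ (x : ℕ) < #F := by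
  constructor
  · intro hx
    have := card_le_card fun y hy => hF (mem_Iic.1 hy) hx
    rw [Fin.card_Iic] at this
    omega
  · intro hx
    by_contra hxF
    have := card_le_card fun y (hy : y ∈ F) =>
      mem_Iio.2 (lt_of_not_ge fun hxy => hxF (hF hxy hy))
    rw [Fin.card_Iio] at this
    omega

theorem Fin.eq_of_sum_Ioi_castSucc_eq {n : ℕ} {N a : Fin (n + 1) → ℕ}
    (htotal : ∑ i, N i = ∑ i, a i)
    (htail : ∀ t : Fin n, ∑ i ∈ Ioi t.castSucc, N i = ∑ i ∈ Ioi t.castSucc, a i) :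
    N = a := by
  have hIoi : ∀ k, ∑ i ∈ Ioi k, N i = ∑ i ∈ Ioi k, a i :=
    Fin.lastCases (by simp [Ioi_eq_empty.2 fun b _ => Fin.le_last b]) htail
  have hIci : ∀ k, ∑ i ∈ Ici k, N i = ∑ i ∈ Ici k, a i := by
    refine Fin.cases (by simpa using htotal) fun t => ?_
    convert htail t using 2 <;> ext <;> simp [Fin.le_def, Fin.lt_def]
  funext k
  have := hIci k
  rw [← Ioi_insert, sum_insert notMem_Ioi_self, sum_insert notMem_Ioi_self, hIoi k] at this
  omega

theorem card_fiber_eq_iff_card_castSucc_lt_eq {ι : Type*} [Fintype ι] {n : ℕ}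
    (g : ι → Fin (n + 1)) {a : Fin (n + 1) → ℕ} (ha : ∑ i, a i = Fintype.card ι) :
    (∀ i, #{j | g j = i} = a i) ↔
      ∀ t : Fin n, #{j | t.castSucc < g j} = ∑ i ∈ Ioi t.castSucc, a i := by
  have hfiber (T : Finset (Fin (n + 1))) : ∑ i ∈ T, #{j | g j = i} = #{j | g j ∈ T} :=
    sum_card_fiberwise_eq_card_filter _ _ _
  constructor
  · intro h t
    simp_rw [← h, hfiber, mem_Ioi]
  · intro h
    refine funext_iff.1 (Fin.eq_of_sum_Ioi_castSucc_eq ?_ fun t => ?_)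
    · rw [hfiber, ha]; simp
    · rw [hfiber, ← h t]; simp

section

variable {P : Type*} [PartialOrder P]

section chainRank

variable {ℓ : ℕ} {c : Fin ℓ → P}

noncomputable def chainRank (c : Fin ℓ → P) (L : LowerSet P) : Fin (ℓ + 1) :=
  ⟨#{t | c t ∈ L}, Nat.lt_succ_of_le ((card_filter_le _ _).trans_eq (card_fin ℓ))⟩

theorem mem_iff_castSucc_lt_chainRank (hc : Monotone c) (L : LowerSet P) (t : Fin ℓ) :
    c t ∈ L ↔ t.castSucc < chainRank c L := by
  rw [Fin.lt_def, Fin.val_castSucc, chainRank, Fin.val_mk]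
  simpa using Fin.mem_iff_lt_card_of_isLowerSet (F := {t | c t ∈ L})
    (by intro u v huv hv; simpa using L.lower (hc huv) (by simpa using hv)) t

theorem inter_range_eq_image_iff_chainRank_eq (hc : StrictMono c) (L : LowerSet P)
    (i : Fin (ℓ + 1)) :
    (L : Set P) ∩ Set.range c = c '' {t | (t : ℕ) < i} ↔ chainRank c L = i := by
  rw [← Set.image_preimage_eq_inter_range, (Set.image_injective.2 hc.injective).eq_iff]
  constructor
  · intro h
    ext
    have : (#{t | c t ∈ L} : ℕ) = #{t : Fin ℓ | (t : ℕ) < i} := by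
      congr 1; ext t; simpa using Set.ext_iff.1 h t
    rw [chainRank, Fin.val_mk, this, Fin.card_filter_val_lt, min_eq_right i.is_le]
  · rintro rfl
    ext t
    simp [mem_iff_castSucc_lt_chainRank hc.monotone, Fin.lt_def]

end chainRank

section memCount

variable {ι : Type*} [Fintype ι]

noncomputable def memCount (α : ι → LowerSet P) (p : P) : ℕ := #{j | p ∈ α j}

theorem memCount_antitone (α : ι → LowerSet P) : Antitone (memCount α) :=
  fun _ _ hpq => card_le_card fun j => by simpa using (α j).lower hpq

theorem memCount_le_card (α : ι → LowerSet P) (p : P) : memCount α p ≤ Fintype.card ι :=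
  card_filter_le _ _

theorem card_inter_range_eq_iff_memCount_eq {ℓ : ℕ} {c : Fin ℓ → P} (hc : StrictMono c)
    (α : ι → LowerSet P) {a : Fin (ℓ + 1) → ℕ} (ha : ∑ i, a i = Fintype.card ι) :
    (∀ i : Fin (ℓ + 1), #{j | (α j : Set P) ∩ Set.range c = c '' {t | (t : ℕ) < i}} = a i) ↔
      ∀ t, memCount α (c t) = ∑ i ∈ Ioi t.castSucc, a i := by
  simp_rw [inter_range_eq_image_iff_chainRank_eq hc, memCount,
    mem_iff_castSucc_lt_chainRank hc.monotone]
  exact card_fiber_eq_iff_card_castSucc_lt_eq _ ha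

variable {s : ℕ}

theorem mem_iff_lt_memCount {α : Fin s → LowerSet P} (hα : Antitone α) (j : Fin s) (p : P) :
    p ∈ α j ↔ (j : ℕ) < memCount α p := by
  simpa [memCount] using Fin.mem_iff_lt_card_of_isLowerSet (F := {j | p ∈ α j})
    (by intro i j hij hj; simpa using hα hij (by simpa using hj)) j

theorem memCount_injOn : Set.InjOn (memCount (P := P) (ι := Fin s)) {α | Antitone α} :=
  fun α hα β hβ h => funext fun j => SetLike.ext fun p => by
    rw [mem_iff_lt_memCount hα, mem_iff_lt_memCount hβ, h]

theorem exists_antitone_memCount_eq {σ : P → ℕ} (hσ : Antitone σ) (hs : ∀ p, σ p ≤ s) :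
    ∃ α : Fin s → LowerSet P, Antitone α ∧ memCount α = σ := by
  let α (j : Fin s) : LowerSet P :=
    ⟨{p | (j : ℕ) < σ p}, fun _ _ hqp hp => hp.trans_le (hσ hqp)⟩
  have hmem (j : Fin s) (p : P) : p ∈ α j ↔ (j : ℕ) < σ p := Iff.rfl
  refine ⟨α, fun i j hij p hp => (Fin.le_def.1 hij).trans_lt hp, funext fun p => ?_⟩
  simp only [memCount, hmem, Fin.card_filter_val_lt, min_eq_right (hs p)]

end memCount

end

theorem card_multichains_eq_card_restricted_partitions_general
    (P : Type*) [PartialOrder P] (ℓ : ℕ) (c : Fin ℓ → P)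
    (hc : StrictMono c) (a : Fin (ℓ + 1) → ℕ) :
    {α : Fin (∑ i, a i) → LowerSet P | Antitone α ∧
        ∀ i : Fin (ℓ + 1),
          (Finset.univ.filter fun j : Fin (∑ i, a i) =>
            ((α j : Set P) ∩ Set.range c = c '' {t : Fin ℓ | (t : ℕ) < (i : ℕ)})).card
            = a i}.ncard =
    {σ : P → ℕ | (∀ p q : P, p ≤ q → σ q ≤ σ p) ∧ (∀ p : P, σ p ≤ ∑ i, a i) ∧
        ∀ j : Fin ℓ,
          σ (c j) = ∑ i ∈ Finset.univ.filter (fun i : Fin (ℓ + 1) => (j : ℕ) < (i : ℕ)),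
            a i}.ncard := by
  have htail (t : Fin ℓ) : univ.filter (fun i : Fin (ℓ + 1) => (t : ℕ) < i) = Ioi t.castSucc := by
    ext; simp [Fin.lt_def]
  have hchain (α : Fin (∑ i, a i) → LowerSet P) :=
    card_inter_range_eq_iff_memCount_eq hc α (Fintype.card_fin _).symm
  simp only [htail]
  refine Set.ncard_congr (fun α _ => memCount α) ?_ ?_ ?_
  · rintro α ⟨-, hcount⟩
    exact ⟨fun p q => (memCount_antitone α ·),
      fun p => (memCount_le_card α p).trans_eq (Fintype.card_fin _), (hchain α).1 hcount⟩
  · exact fun α β hα hβ => memCount_injOn hα.1 hβ.1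
  · rintro σ ⟨hσ, hle, hcσ⟩
    obtain ⟨α, hα, rfl⟩ := exists_antitone_memCount_eq (fun p q => hσ p q) hle
    exact ⟨α, ⟨hα, (hchain α).2 hcσ⟩, rfl⟩

/-- Let `C = {c 0 < ⋯ < c (ℓ-1)}` be a chain in a finite poset `P` and
`a = (a₀, …, a_ℓ)` nonnegative integers with sum `s`.  The number of multichains
`α₁ ⊇ ⋯ ⊇ α_s` of order ideals of `P` such that for each `i` exactly `a i` of the
ideals `α_j` satisfy `α_j ∩ C = C_i` equals the number of order-reversing maps
`σ : P → {0,…,s}` with `σ (c j) = a_ℓ + ⋯ + a_{j+1}` for every `j`. -/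
theorem card_multichains_eq_card_restricted_partitions
    (P : Type*) [PartialOrder P] [Fintype P] (ℓ : ℕ) (c : Fin ℓ → P)
    (hc : StrictMono c) (a : Fin (ℓ + 1) → ℕ) :
    {α : Fin (∑ i, a i) → LowerSet P | Antitone α ∧
        ∀ i : Fin (ℓ + 1),
          (Finset.univ.filter fun j : Fin (∑ i, a i) =>
            ((α j : Set P) ∩ Set.range c = c '' {t : Fin ℓ | (t : ℕ) < (i : ℕ)})).card
            = a i}.ncard =
    {σ : P → ℕ | (∀ p q : P, p ≤ q → σ q ≤ σ p) ∧ (∀ p : P, σ p ≤ ∑ i, a i) ∧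
        ∀ j : Fin ℓ,
          σ (c j) = ∑ i ∈ Finset.univ.filter (fun i : Fin (ℓ + 1) => (j : ℕ) < (i : ℕ)),
            a i}.ncard :=
  card_multichains_eq_card_restricted_partitions_general P ℓ c hc a
end
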